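/- arXiv:2410.13476 — 2 statements merged into one kernel-verified Lean document; each statement's English description precedes it below -/
import Mathlib

section
/- Let α : ℝ → ℝ² be a regular C³ plane curve on an open interval I with signed curvature K(t) ≠ 0, let f : I → ℝ be of class C², and define γ : I → ℝ³ by γ(t) = (α₁(t), α₂(t), f(t)). Then the unit binormal vector B(t) = (γ'(t) × γ''(t)) / ‖γ'(t) × γ''(t)‖ of γ satisfies B(t) = ( −ι(J(f''(t)·α'(t) − f'(t)·α''(t))) + ṡ(t)³ K(t)·e₃ ) / √( ṡ(t)⁶ K(t)² + ‖f''(t)·α'(t) − f'(t)·α''(t)‖² ), where ṡ(t) = ‖α'(t)‖, ι : ℝ² → ℝ³ is the embedding ι(p₁,p₂) = (p₁,p₂,0), and e₃ = (0,0,1). -/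
/-! Since `γ' = (α', f')` and `γ'' = (α'', f'')`, the cross product `γ' × γ''` has horizontal part
`−ι J(f''α' − f'α'')` and vertical part `det(α', α'') = ⟪α'', Jα'⟫ = ṡ³K`. The two parts are
orthogonal and `ι`, `J` are isometries, so `‖γ' × γ''‖` is the square root in the formula. -/

open scoped RealInnerProductSpace

noncomputable section

/-- The Euclidean plane `ℝ²`. -/
abbrev E2 := EuclideanSpace ℝ (Fin 2)
/-- Euclidean 3-space `ℝ³`. -/
abbrev E3 := EuclideanSpace ℝ (Fin 3)

/-- The point `(a, b)` of `ℝ²`. -/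
def mk2 (a b : ℝ) : E2 := (WithLp.equiv 2 (Fin 2 → ℝ)).symm ![a, b]
/-- The point `(a, b, c)` of `ℝ³`. -/
def mk3 (a b c : ℝ) : E3 := (WithLp.equiv 2 (Fin 3 → ℝ)).symm ![a, b, c]

/-- The complex structure `J(p₁, p₂) = (-p₂, p₁)`, rotation by `π/2` counterclockwise. -/
def Jc (v : E2) : E2 := mk2 (-(v 1)) (v 0)
/-- The embedding `ι : ℝ² → ℝ³`, `ι(p₁, p₂) = (p₁, p₂, 0)`. -/
def emb (v : E2) : E3 := mk3 (v 0) (v 1) 0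
/-- The unit vector `e₃ = (0, 0, 1)`. -/
def e₃ : E3 := mk3 0 0 1
/-- The cross product in `ℝ³`. -/
def cross3 (u v : E3) : E3 :=
  mk3 (u 1 * v 2 - u 2 * v 1) (u 2 * v 0 - u 0 * v 2) (u 0 * v 1 - u 1 * v 0)

open Topology

theorem HasDerivAt.mk3 {a b c : ℝ → ℝ} {a' b' c' t : ℝ} (ha : HasDerivAt a a' t)
    (hb : HasDerivAt b b' t) (hc : HasDerivAt c c' t) :
    HasDerivAt (fun s => mk3 (a s) (b s) (c s)) (mk3 a' b' c') t := by
  have hvec : HasDerivAt (fun s => ![a s, b s, c s]) ![a', b', c'] t := by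
    refine hasDerivAt_pi.2 fun i => ?_
    fin_cases i <;> assumption
  exact (PiLp.hasFDerivAt_toLp 2 _).comp_hasDerivAt t hvec

theorem HasDerivAt.euclidean_apply {ι : Type*} [Fintype ι] {x : ℝ → EuclideanSpace ℝ ι}
    {x' : EuclideanSpace ℝ ι} {t : ℝ} (hx : HasDerivAt x x' t) (i : ι) :
    HasDerivAt (fun s => x s i) (x' i) t :=
  (PiLp.hasFDerivAt_apply 2 (x t) i).comp_hasDerivAt t hx

theorem ContDiffOn.differentiableAt_deriv {F : Type*} [NormedAddCommGroup F] [NormedSpace ℝ F]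
    {g : ℝ → F} {s : Set ℝ} (hg : ContDiffOn ℝ 2 g s) (hs : IsOpen s) {t : ℝ} (ht : t ∈ s) :
    DifferentiableAt ℝ (deriv g) t :=
  ((hg.deriv_of_isOpen hs (m := 1) (by norm_num)).contDiffAt (hs.mem_nhds ht)).differentiableAt
    one_ne_zero

section Cylinder

variable {α : ℝ → E2} {f : ℝ → ℝ} {s : Set ℝ} {t : ℝ}

theorem hasDerivAt_cylinder (hα : DifferentiableAt ℝ α t) (hf : DifferentiableAt ℝ f t) :
    HasDerivAt (fun r => mk3 (α r 0) (α r 1) (f r))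
      (mk3 (deriv α t 0) (deriv α t 1) (deriv f t)) t :=
  (hα.hasDerivAt.euclidean_apply 0).mk3 (hα.hasDerivAt.euclidean_apply 1) hf.hasDerivAt

theorem deriv_cylinder_eventuallyEq (hα : DifferentiableOn ℝ α s) (hf : DifferentiableOn ℝ f s)
    (hs : IsOpen s) (ht : t ∈ s) :
    deriv (fun r => mk3 (α r 0) (α r 1) (f r)) =ᶠ[𝓝 t]
      fun r => mk3 (deriv α r 0) (deriv α r 1) (deriv f r) := by
  filter_upwards [hs.mem_nhds ht] with r hr
  exact (hasDerivAt_cylinder (hα.differentiableAt (hs.mem_nhds hr))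
    (hf.differentiableAt (hs.mem_nhds hr))).deriv

theorem deriv_deriv_cylinder (hα : ContDiffOn ℝ 2 α s) (hf : ContDiffOn ℝ 2 f s) (hs : IsOpen s)
    (ht : t ∈ s) :
    deriv (deriv fun r => mk3 (α r 0) (α r 1) (f r)) t =
      mk3 (deriv (deriv α) t 0) (deriv (deriv α) t 1) (deriv (deriv f) t) :=
  (deriv_cylinder_eventuallyEq (hα.differentiableOn two_ne_zero)
    (hf.differentiableOn two_ne_zero) hs ht).deriv_eq.trans
      (hasDerivAt_cylinder (hα.differentiableAt_deriv hs ht) (hf.differentiableAt_deriv hs ht)).deriv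

end Cylinder

theorem inner_Jc (w u : E2) : ⟪w, Jc u⟫ = u 0 * w 1 - u 1 * w 0 := by
  simp [Jc, mk2, PiLp.inner_apply, Fin.sum_univ_two]
  ring

theorem cross3_mk3_mk3 (u w : E2) (a b : ℝ) :
    cross3 (mk3 (u 0) (u 1) a) (mk3 (w 0) (w 1) b) =
      -(emb (Jc (b • u - a • w))) + ⟪w, Jc u⟫ • e₃ := by
  rw [inner_Jc]
  ext i
  fin_cases i <;> simp [cross3, mk3, emb, Jc, mk2, e₃, mul_comm]

theorem norm_Jc (v : E2) : ‖Jc v‖ = ‖v‖ := by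
  simp [EuclideanSpace.norm_eq, Jc, mk2, Fin.sum_univ_two, add_comm]

theorem norm_neg_emb_add_smul_e₃ (v : E2) (c : ℝ) :
    ‖-(emb v) + c • e₃‖ = √(c ^ 2 + ‖v‖ ^ 2) := by
  rw [EuclideanSpace.norm_eq, EuclideanSpace.norm_eq, Real.sq_sqrt (by positivity)]
  simp [emb, e₃, mk3, Fin.sum_univ_two, Fin.sum_univ_three]
  congr 1
  ring

theorem cylindrical_curve_binormal_general
    (I : Set ℝ) (hIopen : IsOpen I)
    (α : ℝ → E2) (f : ℝ → ℝ) (γ : ℝ → E3) (K : ℝ → ℝ)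
    (hα : ContDiffOn ℝ 3 α I) (hreg : ∀ t ∈ I, deriv α t ≠ 0)
    (hK : ∀ t ∈ I, K t = ⟪deriv (deriv α) t, Jc (deriv α t)⟫ / ‖deriv α t‖ ^ 3)
    (hf : ContDiffOn ℝ 2 f I)
    (hγ : ∀ t, γ t = mk3 (α t 0) (α t 1) (f t)) :
    ∀ t ∈ I,
      ‖cross3 (deriv γ t) (deriv (deriv γ) t)‖⁻¹ • cross3 (deriv γ t) (deriv (deriv γ) t) =
        (Real.sqrt (‖deriv α t‖ ^ 6 * K t ^ 2 +
            ‖deriv (deriv f) t • deriv α t - deriv f t • deriv (deriv α) t‖ ^ 2))⁻¹ •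
          (-(emb (Jc (deriv (deriv f) t • deriv α t - deriv f t • deriv (deriv α) t))) +
            (‖deriv α t‖ ^ 3 * K t) • e₃) := by
  intro t ht
  obtain rfl : γ = _ := funext hγ
  have hα₂ : ContDiffOn ℝ 2 α I := hα.of_le (by norm_num)
  have hcurv : ‖deriv α t‖ ^ 3 * K t = ⟪deriv (deriv α) t, Jc (deriv α t)⟫ := by
    rw [hK t ht, mul_div_cancel₀ _ (pow_ne_zero 3 (norm_ne_zero_iff.2 (hreg t ht)))]
  rw [(deriv_cylinder_eventuallyEq (hα₂.differentiableOn two_ne_zero)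
      (hf.differentiableOn two_ne_zero) hIopen ht).eq_of_nhds, deriv_deriv_cylinder hα₂ hf hIopen ht,
    cross3_mk3_mk3, ← hcurv, norm_neg_emb_add_smul_e₃, norm_Jc, mul_pow, ← pow_mul]

/-- For a regular `C³` plane curve `α` with nonvanishing signed curvature `K`
and a `C²` function `f`, the unit binormal `B = (γ' × γ'')/‖γ' × γ''‖` of the cylindrical curve
`γ(t) = (α₁(t), α₂(t), f(t))` satisfies
`B = (−ι(J(f''α' − f'α'')) + ṡ³K·e₃)/√(ṡ⁶K² + ‖f''α' − f'α''‖²)` where `ṡ = ‖α'‖`. -/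
theorem cylindrical_curve_binormal
    (I : Set ℝ) (hIopen : IsOpen I) (hIconn : I.OrdConnected)
    (α : ℝ → E2) (f : ℝ → ℝ) (γ : ℝ → E3) (K : ℝ → ℝ)
    (hα : ContDiffOn ℝ 3 α I) (hreg : ∀ t ∈ I, deriv α t ≠ 0)
    (hK : ∀ t ∈ I, K t = ⟪deriv (deriv α) t, Jc (deriv α t)⟫ / ‖deriv α t‖ ^ 3)
    (hK0 : ∀ t ∈ I, K t ≠ 0)
    (hf : ContDiffOn ℝ 2 f I)
    (hγ : ∀ t, γ t = mk3 (α t 0) (α t 1) (f t)) :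
    ∀ t ∈ I,
      ‖cross3 (deriv γ t) (deriv (deriv γ) t)‖⁻¹ • cross3 (deriv γ t) (deriv (deriv γ) t) =
        (Real.sqrt (‖deriv α t‖ ^ 6 * K t ^ 2 +
            ‖deriv (deriv f) t • deriv α t - deriv f t • deriv (deriv α) t‖ ^ 2))⁻¹ •
          (-(emb (Jc (deriv (deriv f) t • deriv α t - deriv f t • deriv (deriv α) t))) +
            (‖deriv α t‖ ^ 3 * K t) • e₃) :=
  cylindrical_curve_binormal_general I hIopen α f γ K hα hreg hK hf hγ
end
end

section
/- Let α : ℝ → ℝ² be a regular C³ plane curve on an open interval I with signed curvature K(t) ≠ 0, let f : I → ℝ be of class C³, and define γ : I → ℝ³ by γ(t) = (α₁(t), α₂(t), f(t)). Assume the curvature κ and torsion τ of γ are nonzero at t. Then the second focal curvature c₂(t) = −κ'(t) / ( ‖γ'(t)‖ κ(t)² τ(t) ) of γ satisfies c₂ = [ 3(ṡ⁶K² + ‖f''α' − f'α''‖²)·(d/dt)(ṡ² + f'²) − (ṡ² + f'²)·(d/dt)(ṡ⁶K² + ‖f''α' − f'α''‖²) ] / [ 2√(ṡ⁶K² + ‖f''α'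 − f'α''‖²) · ( f'''·ṡ³K − ⟨J(f''·α' − f'·α''), α'''⟩ ) ], where ṡ(t) = ‖α'(t)‖. -/
open scoped RealInnerProductSpace

noncomputable section

/-!
Write `γ = ι ∘ α + f • e₃`. Then `γ⁽ᵏ⁾ = ι α⁽ᵏ⁾ + f⁽ᵏ⁾ • e₃`, and with `w = f'' α' - f' α''` one
finds `γ' × γ'' = -ι (J w) + ⟪α'', J α'⟫ • e₃`, where `⟪α'', J α'⟫ = ṡ³ K`. Hence
`A := ‖γ' × γ''‖² = ṡ⁶ K² + ‖w‖²`, `B := ‖γ'‖² = ṡ² + f'²` and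
`det (γ', γ'', γ''') = f''' ṡ³ K - ⟪J w, α'''⟫ =: D`. Since `κ = √A / B^{3/2}` and `τ = D / A`,
the quotient rule gives `-κ' = (3 A B' - B A') / (2 √A B^{5/2})`, while `‖γ'‖ κ² τ = D / B^{5/2}`.
-/

open Filter Topology

@[simp] lemma mk2_apply_zero (a b : ℝ) : mk2 a b 0 = a := rfl
@[simp] lemma mk2_apply_one (a b : ℝ) : mk2 a b 1 = b := rfl
@[simp] lemma mk3_apply_zero (a b c : ℝ) : mk3 a b c 0 = a := rfl
@[simp] lemma mk3_apply_one (a b c : ℝ) : mk3 a b c 1 = b := rfl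
@[simp] lemma mk3_apply_two (a b c : ℝ) : mk3 a b c 2 = c := rfl

@[simp] lemma Jc_apply_zero (v : E2) : Jc v 0 = -v 1 := rfl
@[simp] lemma Jc_apply_one (v : E2) : Jc v 1 = v 0 := rfl

lemma Jc_zero : Jc 0 = 0 := by ext i; fin_cases i <;> simp

def embL : E2 →L[ℝ] E3 := LinearMap.toContinuousLinearMap
  { toFun := emb
    map_add' u v := by ext i; fin_cases i <;> simp [emb]
    map_smul' c v := by ext i; fin_cases i <;> simp [emb] }

def JcL : E2 →L[ℝ] E2 := LinearMap.toContinuousLinearMap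
  { toFun := Jc
    map_add' u v := by ext i; fin_cases i <;> simp [Jc]; ring
    map_smul' c v := by ext i; fin_cases i <;> simp [Jc] }

lemma inner_E2 (x y : E2) : ⟪x, y⟫ = x 0 * y 0 + x 1 * y 1 := by
  simp [PiLp.inner_apply, Fin.sum_univ_two, mul_comm]

lemma inner_E3 (x y : E3) : ⟪x, y⟫ = x 0 * y 0 + x 1 * y 1 + x 2 * y 2 := by
  simp [PiLp.inner_apply, Fin.sum_univ_three, mul_comm]

lemma norm_sq_E2 (x : E2) : ‖x‖ ^ 2 = x 0 ^ 2 + x 1 ^ 2 := by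
  rw [← real_inner_self_eq_norm_sq, inner_E2]; ring

lemma norm_sq_E3 (x : E3) : ‖x‖ ^ 2 = x 0 ^ 2 + x 1 ^ 2 + x 2 ^ 2 := by
  rw [← real_inner_self_eq_norm_sq, inner_E3]; ring

lemma emb_add_smul_e₃_eq_mk3 (a : E2) (p : ℝ) :
    emb a + p • e₃ = mk3 (a 0) (a 1) p := by
  ext i; fin_cases i <;> simp [emb, e₃]

lemma norm_sq_emb_add_smul_e₃ (a : E2) (p : ℝ) : ‖emb a + p • e₃‖ ^ 2 = ‖a‖ ^ 2 + p ^ 2 := by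
  rw [emb_add_smul_e₃_eq_mk3, norm_sq_E3, norm_sq_E2]; rfl

lemma cross3_emb_add_smul_e₃ (a b : E2) (p q : ℝ) :
    cross3 (emb a + p • e₃) (emb b + q • e₃) = emb (-Jc (q • a - p • b)) + ⟪b, Jc a⟫ • e₃ := by
  simp only [emb_add_smul_e₃_eq_mk3, cross3, inner_E2]
  ext i; fin_cases i <;> simp <;> ring

lemma norm_sq_cross3_emb_add_smul_e₃ (a b : E2) (p q : ℝ) :
    ‖cross3 (emb a + p • e₃) (emb b + q • e₃)‖ ^ 2 = ‖q • a - p • b‖ ^ 2 + ⟪b, Jc a⟫ ^ 2 := by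
  rw [cross3_emb_add_smul_e₃, norm_sq_emb_add_smul_e₃, norm_sq_E2, norm_sq_E2]
  simp; ring

lemma inner_cross3_emb_add_smul_e₃ (a b c : E2) (p q r : ℝ) :
    ⟪cross3 (emb a + p • e₃) (emb b + q • e₃), emb c + r • e₃⟫ =
      r * ⟪b, Jc a⟫ - ⟪Jc (q • a - p • b), c⟫ := by
  rw [cross3_emb_add_smul_e₃, emb_add_smul_e₃_eq_mk3, emb_add_smul_e₃_eq_mk3, inner_E3]
  simp [inner_E2]; ring

-- Also true for `a = 0`: then `⟪b, Jc a⟫ = 0`, and both sides vanish.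
lemma norm_pow_three_mul_inner_Jc_div (a b : E2) :
    ‖a‖ ^ 3 * (⟪b, Jc a⟫ / ‖a‖ ^ 3) = ⟪b, Jc a⟫ := by
  rcases eq_or_ne a 0 with rfl | ha
  · simp [Jc_zero]
  · field_simp

lemma neg_deriv_div_eq_of_eventuallyEq_sqrt_div {κ A B : ℝ → ℝ} {t : ℝ} (D : ℝ)
    (hA : DifferentiableAt ℝ A t) (hB : DifferentiableAt ℝ B t) (hA0 : 0 < A t) (hB0 : 0 < B t)
    (hκ : κ =ᶠ[𝓝 t] fun u => √(A u) / √(B u) ^ 3) :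
    -deriv κ t / (√(B t) * κ t ^ 2 * (D / A t)) =
      (3 * A t * deriv B t - B t * deriv A t) / (2 * √(A t) * D) := by
  have hκ' := ((hA.hasDerivAt.sqrt hA0.ne').div ((hB.hasDerivAt.sqrt hB0.ne').pow 3)
    (pow_ne_zero 3 (Real.sqrt_pos.mpr hB0).ne')).congr_of_eventuallyEq hκ
  rw [hκ'.deriv, hκ.eq_of_nhds]
  simp only [Pi.pow_apply]
  have hA2 := Real.sq_sqrt hA0.le
  have hB2 := Real.sq_sqrt hB0.le
  generalize A t = x, B t = y at *
  have ha := Real.sqrt_pos.mpr hA0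
  have hb := Real.sqrt_pos.mpr hB0
  generalize √x = a, √y = b at *
  subst hA2 hB2
  rcases eq_or_ne D 0 with rfl | hD
  · simp
  field_simp
  ring

lemma ContDiffOn.differentiableOn_deriv_deriv {F : Type*} [NormedAddCommGroup F]
    [NormedSpace ℝ F] {g : ℝ → F} {I : Set ℝ} (hI : IsOpen I) (hg : ContDiffOn ℝ 3 g I) :
    DifferentiableOn ℝ g I ∧ DifferentiableOn ℝ (deriv g) I ∧
      DifferentiableOn ℝ (deriv (deriv g)) I := by
  have hg₁ := hg.deriv_of_isOpen hI (m := 2) (by norm_num)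
  have hg₂ := hg₁.deriv_of_isOpen hI (m := 1) (by norm_num)
  exact ⟨hg.differentiableOn (by norm_num), hg₁.differentiableOn (by norm_num),
    hg₂.differentiableOn (by norm_num)⟩

section CylindricalCurve

variable {I : Set ℝ} {α : ℝ → E2} {f : ℝ → ℝ}

lemma HasDerivAt.emb_add_smul_e₃ {a' : E2} {f' u : ℝ} (hα : HasDerivAt α a' u)
    (hf : HasDerivAt f f' u) :
    HasDerivAt (fun s => emb (α s) + f s • e₃) (emb a' + f' • e₃) u :=
  (embL.hasFDerivAt.comp_hasDerivAt u hα).add (hf.smul_const e₃)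

lemma eqOn_deriv_emb_add_smul_e₃ (hI : IsOpen I) (hα : DifferentiableOn ℝ α I)
    (hf : DifferentiableOn ℝ f I) :
    Set.EqOn (deriv fun u => emb (α u) + f u • e₃) (fun u => emb (deriv α u) + deriv f u • e₃) I :=
  fun _ hu =>
    ((hα.differentiableAt (hI.mem_nhds hu)).hasDerivAt.emb_add_smul_e₃
      (hf.differentiableAt (hI.mem_nhds hu)).hasDerivAt).deriv

lemma eqOn_derivs_emb_add_smul_e₃ (hI : IsOpen I) (hα : ContDiffOn ℝ 3 α I)
    (hf : ContDiffOn ℝ 3 f I) {γ : ℝ → E3} (hγ : γ = fun u => emb (α u) + f u • e₃) :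
    Set.EqOn (deriv γ) (fun u => emb (deriv α u) + deriv f u • e₃) I ∧
      Set.EqOn (deriv (deriv γ))
        (fun u => emb (deriv (deriv α) u) + deriv (deriv f) u • e₃) I ∧
      Set.EqOn (deriv (deriv (deriv γ)))
        (fun u => emb (deriv (deriv (deriv α)) u) + deriv (deriv (deriv f)) u • e₃) I := by
  subst hγ
  obtain ⟨hα₀, hα₁, hα₂⟩ := hα.differentiableOn_deriv_deriv hI
  obtain ⟨hf₀, hf₁, hf₂⟩ := hf.differentiableOn_deriv_deriv hI
  have h₁ := eqOn_deriv_emb_add_smul_e₃ hI hα₀ hf₀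
  have h₂ := (h₁.deriv hI).trans (eqOn_deriv_emb_add_smul_e₃ hI hα₁ hf₁)
  exact ⟨h₁, h₂, (h₂.deriv hI).trans (eqOn_deriv_emb_add_smul_e₃ hI hα₂ hf₂)⟩

variable {γ : ℝ → E3} {t : ℝ}

lemma cylindrical_curve_invariants (hI : IsOpen I) (hα : ContDiffOn ℝ 3 α I)
    (hf : ContDiffOn ℝ 3 f I) (hγ : ∀ u, γ u = mk3 (α u 0) (α u 1) (f u)) (ht : t ∈ I) :
    ‖deriv γ t‖ ^ 2 = ‖deriv α t‖ ^ 2 + deriv f t ^ 2 ∧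
      ‖cross3 (deriv γ t) (deriv (deriv γ) t)‖ ^ 2 =
        ‖deriv (deriv f) t • deriv α t - deriv f t • deriv (deriv α) t‖ ^ 2 +
          ⟪deriv (deriv α) t, Jc (deriv α t)⟫ ^ 2 ∧
      ⟪cross3 (deriv γ t) (deriv (deriv γ) t), deriv (deriv (deriv γ)) t⟫ =
        deriv (deriv (deriv f)) t * ⟪deriv (deriv α) t, Jc (deriv α t)⟫ -
          ⟪Jc (deriv (deriv f) t • deriv α t - deriv f t • deriv (deriv α) t),
            deriv (deriv (deriv α)) t⟫ := by
  obtain ⟨hγ₁, hγ₂, hγ₃⟩ := eqOn_derivs_emb_add_smul_e₃ hI hα hf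
    (funext fun u => (hγ u).trans (emb_add_smul_e₃_eq_mk3 _ _).symm)
  rw [hγ₁ ht, hγ₂ ht, hγ₃ ht]
  exact ⟨norm_sq_emb_add_smul_e₃ _ _, norm_sq_cross3_emb_add_smul_e₃ _ _ _ _,
    inner_cross3_emb_add_smul_e₃ _ _ _ _ _ _⟩

lemma differentiableAt_cylindrical_curve_invariants (hI : IsOpen I) (hα : ContDiffOn ℝ 3 α I)
    (hf : ContDiffOn ℝ 3 f I) (ht : t ∈ I) :
    DifferentiableAt ℝ (fun u => ‖deriv α u‖ ^ 2 + deriv f u ^ 2) t ∧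
      DifferentiableAt ℝ (fun u =>
        ‖deriv (deriv f) u • deriv α u - deriv f u • deriv (deriv α) u‖ ^ 2 +
          ⟪deriv (deriv α) u, Jc (deriv α u)⟫ ^ 2) t := by
  obtain ⟨-, hα₁, hα₂⟩ := hα.differentiableOn_deriv_deriv hI
  obtain ⟨-, hf₁, hf₂⟩ := hf.differentiableOn_deriv_deriv hI
  replace hα₁ := hα₁.differentiableAt (hI.mem_nhds ht)
  replace hα₂ := hα₂.differentiableAt (hI.mem_nhds ht)
  replace hf₁ := hf₁.differentiableAt (hI.mem_nhds ht)
  replace hf₂ := hf₂.differentiableAt (hI.mem_nhds ht)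
  exact ⟨(hα₁.norm_sq ℝ).add (hf₁.pow 2), ((hf₂.smul hα₁).sub (hf₁.smul hα₂)).norm_sq ℝ |>.add
    ((hα₂.inner ℝ (JcL.differentiableAt.comp t hα₁)).pow 2)⟩

end CylindricalCurve

theorem cylindrical_curve_second_focal_curvature_general
    (I : Set ℝ) (hIopen : IsOpen I)
    (α : ℝ → E2) (f : ℝ → ℝ) (γ : ℝ → E3) (K : ℝ → ℝ) (κ : ℝ → ℝ) (τ : ℝ → ℝ)
    (hα : ContDiffOn ℝ 3 α I) (hreg : ∀ t ∈ I, deriv α t ≠ 0)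
    (hK : ∀ t ∈ I, K t = ⟪deriv (deriv α) t, Jc (deriv α t)⟫ / ‖deriv α t‖ ^ 3)
    (hK0 : ∀ t ∈ I, K t ≠ 0)
    (hf : ContDiffOn ℝ 3 f I)
    (hγ : ∀ t, γ t = mk3 (α t 0) (α t 1) (f t))
    (hκ : ∀ u, κ u = ‖cross3 (deriv γ u) (deriv (deriv γ) u)‖ / ‖deriv γ u‖ ^ 3)
    (hτ : ∀ u, τ u =
      ⟪cross3 (deriv γ u) (deriv (deriv γ) u), deriv (deriv (deriv γ)) u⟫ /
        ‖cross3 (deriv γ u) (deriv (deriv γ) u)‖ ^ 2)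
    (t : ℝ) (ht : t ∈ I) :
    -deriv κ t / (‖deriv γ t‖ * κ t ^ 2 * τ t) =
      (3 * (‖deriv α t‖ ^ 6 * K t ^ 2 +
            ‖deriv (deriv f) t • deriv α t - deriv f t • deriv (deriv α) t‖ ^ 2) *
          deriv (fun u => ‖deriv α u‖ ^ 2 + deriv f u ^ 2) t -
        (‖deriv α t‖ ^ 2 + deriv f t ^ 2) *
          deriv (fun u => ‖deriv α u‖ ^ 6 * K u ^ 2 +
            ‖deriv (deriv f) u • deriv α u - deriv f u • deriv (deriv α) u‖ ^ 2) t) /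
      (2 * Real.sqrt (‖deriv α t‖ ^ 6 * K t ^ 2 +
            ‖deriv (deriv f) t • deriv α t - deriv f t • deriv (deriv α) t‖ ^ 2) *
        (deriv (deriv (deriv f)) t * ‖deriv α t‖ ^ 3 * K t -
          ⟪Jc (deriv (deriv f) t • deriv α t - deriv f t • deriv (deriv α) t),
            deriv (deriv (deriv α)) t⟫)) := by
  have hK_inner : ∀ u ∈ I, ‖deriv α u‖ ^ 3 * K u = ⟪deriv (deriv α) u, Jc (deriv α u)⟫ :=
    fun u hu => (hK u hu).symm ▸ norm_pow_three_mul_inner_Jc_div _ _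
  set w : ℝ → E2 := fun u => deriv (deriv f) u • deriv α u - deriv f u • deriv (deriv α) u
  set A : ℝ → ℝ := fun u => ‖deriv α u‖ ^ 6 * K u ^ 2 + ‖w u‖ ^ 2 with hA_def
  set B : ℝ → ℝ := fun u => ‖deriv α u‖ ^ 2 + deriv f u ^ 2
  have hA : ∀ u ∈ I, A u = ‖w u‖ ^ 2 + ⟪deriv (deriv α) u, Jc (deriv α u)⟫ ^ 2 := fun u hu => by
    rw [hA_def, ← hK_inner u hu]; ring
  have hcross : ∀ u ∈ I, ‖cross3 (deriv γ u) (deriv (deriv γ) u)‖ ^ 2 = A u := fun u hu =>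
    (cylindrical_curve_invariants hIopen hα hf hγ hu).2.1.trans (hA u hu).symm
  have hspeed : ∀ u ∈ I, ‖deriv γ u‖ ^ 2 = B u := fun u hu =>
    (cylindrical_curve_invariants hIopen hα hf hγ hu).1
  have hκ_eq : κ =ᶠ[𝓝 t] fun u => √(A u) / √(B u) ^ 3 :=
    eventually_of_mem (hIopen.mem_nhds ht) fun u hu => by
      dsimp only
      rw [hκ, ← hcross u hu, ← hspeed u hu, Real.sqrt_sq (norm_nonneg _),
        Real.sqrt_sq (norm_nonneg _)]
  have hτ_eq : τ t = (deriv (deriv (deriv f)) t * ‖deriv α t‖ ^ 3 * K t -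
      ⟪Jc (w t), deriv (deriv (deriv α)) t⟫) / A t := by
    rw [hτ, hcross t ht, (cylindrical_curve_invariants hIopen hα hf hγ ht).2.2, mul_assoc,
      hK_inner t ht]
  obtain ⟨hB_diff, hA_diff⟩ := differentiableAt_cylindrical_curve_invariants hIopen hα hf ht
  have hα'_ne := hreg t ht
  have hK_ne := hK0 t ht
  rw [← Real.sqrt_sq (norm_nonneg (deriv γ t)), hspeed t ht, hτ_eq]
  exact neg_deriv_div_eq_of_eventuallyEq_sqrt_div _
    (hA_diff.congr_of_eventuallyEq (eventually_of_mem (hIopen.mem_nhds ht) hA)) hB_diff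
    (by positivity) (by positivity) hκ_eq

/-- For a regular `C³` plane curve `α` with nonvanishing signed curvature `K`
and a `C³` function `f`, the second focal curvature `c₂ = −κ'/(‖γ'‖κ²τ)` of the cylindrical
curve `γ(t) = (α₁(t), α₂(t), f(t))` satisfies
`c₂ = [3(ṡ⁶K² + ‖f''α' − f'α''‖²)(d/dt)(ṡ² + f'²) − (ṡ² + f'²)(d/dt)(ṡ⁶K² + ‖f''α' − f'α''‖²)] /
      [2√(ṡ⁶K² + ‖f''α' − f'α''‖²)·(f'''ṡ³K − ⟨J(f''α' − f'α''), α'''⟩)]` where `ṡ = ‖α'‖`. -/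
theorem cylindrical_curve_second_focal_curvature
    (I : Set ℝ) (hIopen : IsOpen I) (hIconn : I.OrdConnected)
    (α : ℝ → E2) (f : ℝ → ℝ) (γ : ℝ → E3) (K : ℝ → ℝ) (κ : ℝ → ℝ) (τ : ℝ → ℝ)
    (hα : ContDiffOn ℝ 3 α I) (hreg : ∀ t ∈ I, deriv α t ≠ 0)
    (hK : ∀ t ∈ I, K t = ⟪deriv (deriv α) t, Jc (deriv α t)⟫ / ‖deriv α t‖ ^ 3)
    (hK0 : ∀ t ∈ I, K t ≠ 0)
    (hf : ContDiffOn ℝ 3 f I)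
    (hγ : ∀ t, γ t = mk3 (α t 0) (α t 1) (f t))
    (hκ : ∀ u, κ u = ‖cross3 (deriv γ u) (deriv (deriv γ) u)‖ / ‖deriv γ u‖ ^ 3)
    (hτ : ∀ u, τ u =
      ⟪cross3 (deriv γ u) (deriv (deriv γ) u), deriv (deriv (deriv γ)) u⟫ /
        ‖cross3 (deriv γ u) (deriv (deriv γ) u)‖ ^ 2)
    (t : ℝ) (ht : t ∈ I) (hκ0 : κ t ≠ 0) (hτ0 : τ t ≠ 0) :
    -deriv κ t / (‖deriv γ t‖ * κ t ^ 2 * τ t) =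
      (3 * (‖deriv α t‖ ^ 6 * K t ^ 2 +
            ‖deriv (deriv f) t • deriv α t - deriv f t • deriv (deriv α) t‖ ^ 2) *
          deriv (fun u => ‖deriv α u‖ ^ 2 + deriv f u ^ 2) t -
        (‖deriv α t‖ ^ 2 + deriv f t ^ 2) *
          deriv (fun u => ‖deriv α u‖ ^ 6 * K u ^ 2 +
            ‖deriv (deriv f) u • deriv α u - deriv f u • deriv (deriv α) u‖ ^ 2) t) /
      (2 * Real.sqrt (‖deriv α t‖ ^ 6 * K t ^ 2 +
            ‖deriv (deriv f) t • deriv α t - deriv f t • deriv (deriv α) t‖ ^ 2) *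
        (deriv (deriv (deriv f)) t * ‖deriv α t‖ ^ 3 * K t -
          ⟪Jc (deriv (deriv f) t • deriv α t - deriv f t • deriv (deriv α) t),
            deriv (deriv (deriv α)) t⟫)) :=
  cylindrical_curve_second_focal_curvature_general I hIopen α f γ K κ τ hα hreg hK hK0 hf hγ hκ hτ t
    ht
end
end
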